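/- arXiv:1112.3267 — 2 statements merged into one kernel-verified Lean document; each statement's English description precedes it below -/
import Mathlib

section
/- Let Φ : [−a,a] → ℝ be convex continuous, F : [0,T] × ℝ → ℝ continuous and bounded, and h continuous with zero mean on [0,T]. Then the functional I(v) = ∫₀^T [Φ(v') + h(t)v + F(t,v)] dt attains its infimum over the set W ∩ K of zero-mean T-periodic Lipschitz functions with Lipschitz constant at most a. -/
/-!
After restriction to `[0, T]`, the admissible functions form a compact subset of `C([0, T])`:
they are `a`-Lipschitz and, having zero mean, bounded by `a T` (Arzelà–Ascoli). On this set the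
functional is lower semicontinuous. Indeed, replacing `v'` by the slopes of `v` on the dyadic
grid of step `T / 2 ^ k` gives functionals that are continuous in `v` (they are finite sums),
increase with `k` because `Φ` is convex (the slope over a cell is the mean of the slopes over its
two halves), and converge to `∫ Φ (v')` by Rademacher's theorem and dominated convergence. A
supremum of continuous functions is lower semicontinuous, so the infimum is attained.
-/

open Set MeasureTheory Filter Topology
open scoped NNReal BoundedContinuousFunction

lemma HasDerivAt.tendsto_slope_of_le_of_le {g : ℝ → ℝ} {d t : ℝ} (hg : HasDerivAt g d t)
    {ι : Type*} {L : Filter ι} {l u : ι → ℝ} (hl : Tendsto l L (𝓝 t)) (hu : Tendsto u L (𝓝 t))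
    (hlt : ∀ i, l i ≤ t) (htu : ∀ i, t ≤ u i) (hlu : ∀ i, l i < u i) :
    Tendsto (fun i => slope g (l i) (u i)) L (𝓝 d) := by
  rw [Metric.tendsto_nhds]
  intro ε hε
  have hsmall := (hasDerivAt_iff_isLittleO.1 hg).def (half_pos hε)
  filter_upwards [hl.eventually hsmall, hu.eventually hsmall] with i hli hui
  simp only [Real.norm_eq_abs, smul_eq_mul] at hli hui
  have hpos : 0 < u i - l i := sub_pos.2 (hlu i)
  have key : slope g (l i) (u i) - d
      = ((g (u i) - g t - (u i - t) * d) - (g (l i) - g t - (l i - t) * d)) / (u i - l i) := by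
    rw [slope_def_field]; field_simp; ring
  rw [Real.dist_eq, key, abs_div, abs_of_pos hpos, div_lt_iff₀ hpos]
  calc _ ≤ ε / 2 * |u i - t| + ε / 2 * |l i - t| := (abs_sub _ _).trans (add_le_add hui hli)
    _ = ε / 2 * (u i - l i) := by
        rw [abs_of_nonneg (sub_nonneg.2 (htu i)), abs_of_nonpos (sub_nonpos.2 (hlt i))]; ring
    _ < ε * (u i - l i) := by nlinarith

lemma ConvexOn.sub_mul_comp_slope_le {s : Set ℝ} {ψ g : ℝ → ℝ} (hψ : ConvexOn ℝ s ψ)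
    (hg : ∀ x y, slope g x y ∈ s) {a b c : ℝ} (hab : a ≤ b) (hbc : b ≤ c) :
    (c - a) * ψ (slope g a c) ≤ (b - a) * ψ (slope g a b) + (c - b) * ψ (slope g b c) := by
  rcases hab.eq_or_lt with rfl | hac
  · simp
  have hca : 0 < c - a := by linarith
  have hcomb : ((b - a) / (c - a)) • slope g a b + ((c - b) / (c - a)) • slope g b c
      = slope g a c := by
    have h₁ : (b - a) * slope g a b = g b - g a := sub_smul_slope g a b
    have h₂ : (c - b) * slope g b c = g c - g b := sub_smul_slope g b c
    rw [smul_eq_mul, smul_eq_mul, div_mul_eq_mul_div, div_mul_eq_mul_div, h₁, h₂, slope_def_field]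
    ring
  have := hψ.2 (hg a b) (hg b c) (div_nonneg (sub_nonneg.2 hab) hca.le)
    (div_nonneg (sub_nonneg.2 hbc) hca.le) (by field_simp; ring)
  rw [hcomb, smul_eq_mul, smul_eq_mul] at this
  calc (c - a) * ψ (slope g a c)
      ≤ (c - a) * ((b - a) / (c - a) * ψ (slope g a b) + (c - b) / (c - a) * ψ (slope g b c)) := by
        gcongr
    _ = _ := by field_simp

lemma Finset.sum_range_two_mul {M : Type*} [AddCommMonoid M] (f : ℕ → M) (n : ℕ) :
    ∑ j ∈ Finset.range (2 * n), f j = ∑ j ∈ Finset.range n, (f (2 * j) + f (2 * j + 1)) := by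
  induction n with
  | zero => simp
  | succ n ih =>
    rw [Nat.mul_succ, Finset.sum_range_succ, Finset.sum_range_succ, Finset.sum_range_succ, ih,
      add_assoc]

lemma LipschitzWith.slope_mem_Icc {g : ℝ → ℝ} {K : ℝ≥0} (hg : LipschitzWith K g) (x y : ℝ) :
    slope g x y ∈ Icc (-(K : ℝ)) K := by
  refine abs_le.1 ?_
  rcases eq_or_ne x y with rfl | hxy
  · simp
  rw [slope_def_field, abs_div, div_le_iff₀ (abs_pos.2 (sub_ne_zero.2 hxy.symm))]
  simpa [Real.dist_eq] using hg.dist_le_mul y x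

lemma LipschitzWith.deriv_mem_Icc {g : ℝ → ℝ} {K : ℝ≥0} (hg : LipschitzWith K g) (t : ℝ) :
    deriv g t ∈ Icc (-(K : ℝ)) K :=
  abs_le.1 (norm_deriv_le_of_lipschitz hg)

lemma LipschitzWith.intervalIntegrable_comp_deriv {g : ℝ → ℝ} {K : ℝ≥0} (hg : LipschitzWith K g)
    {ψ : ℝ → ℝ} (hψ : Continuous ψ) (p q : ℝ) :
    IntervalIntegrable (fun t => ψ (deriv g t)) volume p q := by
  obtain ⟨C, hC⟩ := isCompact_Icc.exists_bound_of_continuousOn (s := Icc (-(K : ℝ)) K)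
    hψ.continuousOn
  exact intervalIntegrable_const.mono_fun'
    (hψ.measurable.comp (measurable_deriv g)).aestronglyMeasurable
    (ae_of_all _ fun t => hC _ (hg.deriv_mem_Icc t))

lemma intervalIntegral.integral_comp_deriv_congr {p q : ℝ} {v g : ℝ → ℝ}
    (hvg : EqOn v g (uIcc p q)) (G : ℝ → ℝ → ℝ → ℝ) :
    ∫ t in p..q, G t (v t) (deriv v t) = ∫ t in p..q, G t (g t) (deriv g t) := by
  refine intervalIntegral.integral_congr_uIoo fun t ht => ?_
  have hnhds : uIcc p q ∈ 𝓝 t := Icc_mem_nhds ht.1 ht.2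
  have hderiv : deriv v t = deriv g t := Filter.EventuallyEq.deriv_eq (eventually_of_mem hnhds hvg)
  simp only [hvg (Ioo_subset_Icc_self ht), hderiv]

lemma abs_le_of_lipschitzOnWith_of_integral_eq_zero {g : ℝ → ℝ} {K : ℝ≥0} {p q : ℝ}
    (hpq : p < q) (hg : LipschitzOnWith K g (Icc p q)) (h0 : ∫ t in p..q, g t = 0) {s : ℝ}
    (hs : s ∈ Icc p q) : |g s| ≤ K * (q - p) := by
  obtain ⟨c, hc, hgc⟩ := exists_eq_interval_average hpq.ne
    (hg.continuousOn.mono (uIcc_of_le hpq.le).subset)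
  rw [interval_average_eq_div, h0, zero_div] at hgc
  rw [uIoo_of_le hpq.le] at hc
  calc |g s| = dist (g s) (g c) := by rw [Real.dist_eq, hgc, sub_zero]
    _ ≤ K * dist s c := hg.dist_le_mul s hs c (Ioo_subset_Icc_self hc)
    _ ≤ K * (q - p) := by
      gcongr
      rw [Real.dist_eq, abs_le]
      constructor <;> linarith [hs.1, hs.2, hc.1, hc.2]

lemma LipschitzWith.IccExtend {p q : ℝ} (hpq : p ≤ q) {f : Icc p q → ℝ} {K : ℝ≥0}
    (hf : LipschitzWith K f) : LipschitzWith K (IccExtend hpq f) := by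
  have := hf.comp (LipschitzWith.projIcc hpq)
  rwa [mul_one] at this

lemma continuous_integral_IccExtend {p q : ℝ} (hpq : p ≤ q) {L : ℝ → ℝ → ℝ}
    (hL : ContinuousOn (fun z : ℝ × ℝ => L z.1 z.2) (Icc p q ×ˢ univ)) :
    Continuous fun f : Icc p q →ᵇ ℝ => ∫ t in p..q, L t (IccExtend hpq f t) := by
  have hproj : ∀ f : Icc p q →ᵇ ℝ, ∫ t in p..q, L t (IccExtend hpq f t)
      = ∫ t in p..q, L (projIcc p q hpq t) (IccExtend hpq f t) := fun f =>
    intervalIntegral.integral_congr fun t ht => by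
      rw [uIcc_of_le hpq] at ht; rw [projIcc_of_mem hpq ht]
  simp only [hproj]
  refine intervalIntegral.continuous_parametric_intervalIntegral_of_continuous' ?_ p q
  have hpair : Continuous fun z : (Icc p q →ᵇ ℝ) × ℝ =>
      (((projIcc p q hpq z.2 : Icc p q) : ℝ), IccExtend hpq z.1 z.2) :=
    (continuous_subtype_val.comp (continuous_projIcc.comp continuous_snd)).prodMk
      (Continuous.IccExtend (continuous_eval.comp (continuous_fst.prodMap continuous_id))
        continuous_snd)
  exact hL.comp_continuous hpair fun z => ⟨(projIcc p q hpq z.2).2, mem_univ _⟩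

lemma IsCompact.exists_isMinOn_of_monotone_of_tendsto {X ι : Type*} [TopologicalSpace X]
    [SemilatticeSup ι] [Nonempty ι] {K : Set X} (hK : IsCompact K) (hne : K.Nonempty)
    {J : X → ℝ} {J' : ι → X → ℝ} (hcont : ∀ n, ContinuousOn (J' n) K)
    (hmono : ∀ x ∈ K, Monotone fun n => J' n x)
    (hlim : ∀ x ∈ K, Tendsto (fun n => J' n x) atTop (𝓝 (J x))) :
    ∃ x ∈ K, IsMinOn J K x := by
  have hlub : ∀ x ∈ K, IsLUB (range fun n => J' n x) (J x) := fun x hx =>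
    isLUB_of_tendsto_atTop (hmono x hx) (hlim x hx)
  have hlsc : LowerSemicontinuousOn (fun x => ⨆ n, J' n x) K :=
    lowerSemicontinuousOn_ciSup (fun x hx => (hlub x hx).bddAbove)
      fun n => (hcont n).lowerSemicontinuousOn
  obtain ⟨x, hx, hmin⟩ := hlsc.exists_isMinOn hne hK
  refine ⟨x, hx, fun y hy => ?_⟩
  have : ⨆ n, J' n x ≤ ⨆ n, J' n y := hmin hy
  rwa [(hlub x hx).ciSup_eq, (hlub y hy).ciSup_eq] at this

noncomputable def gridLeft (δ t : ℝ) : ℝ := δ * ⌊t / δ⌋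

noncomputable def gridSlope (δ : ℝ) (g : ℝ → ℝ) (t : ℝ) : ℝ :=
  slope g (gridLeft δ t) (gridLeft δ t + δ)

noncomputable def gridEnergy (ψ g : ℝ → ℝ) (δ : ℝ) (n : ℕ) : ℝ :=
  ∑ j ∈ Finset.range n, δ * ψ (slope g (j * δ) ((j + 1) * δ))

section Grid

variable {δ : ℝ}

lemma gridLeft_le (hδ : 0 < δ) (t : ℝ) : gridLeft δ t ≤ t := by
  have := Int.floor_le (t / δ)
  calc gridLeft δ t ≤ δ * (t / δ) := by unfold gridLeft; gcongr
    _ = t := by field_simp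

lemma lt_gridLeft_add (hδ : 0 < δ) (t : ℝ) : t < gridLeft δ t + δ := by
  have := Int.lt_floor_add_one (t / δ)
  calc t = δ * (t / δ) := by field_simp
    _ < δ * (⌊t / δ⌋ + 1) := by gcongr
    _ = gridLeft δ t + δ := by unfold gridLeft; ring

lemma gridLeft_eq_of_mem_Ico (hδ : 0 < δ) {j : ℤ} {t : ℝ} (ht : t ∈ Ico (j * δ) ((j + 1) * δ)) :
    gridLeft δ t = j * δ := by
  have : ⌊t / δ⌋ = j := by
    rw [Int.floor_eq_iff, le_div_iff₀ hδ, div_lt_iff₀ hδ]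
    exact ht
  rw [gridLeft, this, mul_comm]

lemma measurable_gridSlope {g : ℝ → ℝ} (hg : Continuous g) : Measurable (gridSlope δ g) := by
  have hleft : Measurable (gridLeft δ) := by unfold gridLeft; fun_prop
  unfold gridSlope
  simp only [slope_def_field]
  fun_prop

lemma integral_comp_gridSlope (hδ : 0 < δ) (ψ g : ℝ → ℝ) (n : ℕ) :
    ∫ t in (0)..n * δ, ψ (gridSlope δ g t) = gridEnergy ψ g δ n := by
  have hcell : ∀ j : ℕ, EqOn (fun t => ψ (gridSlope δ g t))
      (fun _ => ψ (slope g (j * δ) ((j + 1) * δ))) (uIoo (j * δ) ((j + 1) * δ)) := by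
    intro j t ht
    rw [uIoo_of_le (by nlinarith)] at ht
    have : gridLeft δ t = j * δ := by
      exact_mod_cast gridLeft_eq_of_mem_Ico hδ (j := j) (t := t)
        (by push_cast; exact ⟨ht.1.le, ht.2⟩)
    simp only [gridSlope, this]
    ring_nf
  have hint : ∀ j < n,
      IntervalIntegrable (fun t => ψ (gridSlope δ g t)) volume (j * δ) ((j + 1 : ℕ) * δ) := by
    intro j _
    exact intervalIntegrable_const.congr_uIoo (by exact_mod_cast (hcell j).symm)
  have := intervalIntegral.sum_integral_adjacent_intervals (a := fun j : ℕ => j * δ) hint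
  simp only [Nat.cast_zero, zero_mul, Nat.cast_succ] at this
  rw [← this, gridEnergy]
  refine Finset.sum_congr rfl fun j _ => ?_
  rw [intervalIntegral.integral_congr_uIoo (hcell j), intervalIntegral.integral_const, smul_eq_mul]
  ring

end Grid

lemma tendsto_gridSlope {g : ℝ → ℝ} {t : ℝ} (hg : DifferentiableAt ℝ g t)
    {ι : Type*} {L : Filter ι} {δ : ι → ℝ} (hδ : ∀ i, 0 < δ i) (hδ0 : Tendsto δ L (𝓝 0)) :
    Tendsto (fun i => gridSlope (δ i) g t) L (𝓝 (deriv g t)) := by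
  have hl : Tendsto (fun i => gridLeft (δ i) t) L (𝓝 t) := by
    refine tendsto_of_tendsto_of_tendsto_of_le_of_le (g := fun i => t - δ i) (h := fun _ => t)
      (by simpa using tendsto_const_nhds.sub hδ0) tendsto_const_nhds
      (fun i => ?_) (fun i => gridLeft_le (hδ i) t)
    linarith [lt_gridLeft_add (hδ i) t]
  have hu : Tendsto (fun i => gridLeft (δ i) t + δ i) L (𝓝 t) := by
    simpa using hl.add hδ0
  exact hg.hasDerivAt.tendsto_slope_of_le_of_le hl hu (fun i => gridLeft_le (hδ i) t)
    (fun i => (lt_gridLeft_add (hδ i) t).le) (fun i => by linarith [hδ i])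

lemma gridEnergy_le_gridEnergy_half {s : Set ℝ} {ψ g : ℝ → ℝ} (hψ : ConvexOn ℝ s ψ)
    (hg : ∀ x y, slope g x y ∈ s) {δ : ℝ} (hδ : 0 ≤ δ) (n : ℕ) :
    gridEnergy ψ g δ n ≤ gridEnergy ψ g (δ / 2) (2 * n) := by
  rw [gridEnergy, gridEnergy, Finset.sum_range_two_mul]
  refine Finset.sum_le_sum fun j _ => ?_
  have hcell := hψ.sub_mul_comp_slope_le hg (a := j * δ) (b := j * δ + δ / 2) (c := (j + 1) * δ)
    (by linarith) (by linarith)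
  have e₁ : ((2 * j : ℕ) : ℝ) * (δ / 2) = j * δ := by push_cast; ring
  have e₂ : (((2 * j : ℕ) : ℝ) + 1) * (δ / 2) = j * δ + δ / 2 := by push_cast; ring
  have e₃ : ((2 * j + 1 : ℕ) : ℝ) * (δ / 2) = j * δ + δ / 2 := by push_cast; ring
  have e₄ : (((2 * j + 1 : ℕ) : ℝ) + 1) * (δ / 2) = (j + 1) * δ := by push_cast; ring
  rw [e₁, e₂, e₃, e₄]
  calc _ = ((j + 1) * δ - j * δ) * ψ (slope g (j * δ) ((j + 1) * δ)) := by ring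
    _ ≤ _ := hcell
    _ = _ := by ring

lemma monotone_gridEnergy_dyadic {s : Set ℝ} {ψ g : ℝ → ℝ} (hψ : ConvexOn ℝ s ψ)
    (hg : ∀ x y, slope g x y ∈ s) {T : ℝ} (hT : 0 ≤ T) :
    Monotone fun k : ℕ => gridEnergy ψ g (T / 2 ^ k) (2 ^ k) := by
  refine monotone_nat_of_le_succ fun k => ?_
  have := gridEnergy_le_gridEnergy_half hψ hg (δ := T / 2 ^ k) (by positivity) (2 ^ k)
  rwa [div_div, ← pow_succ, ← pow_succ'] at this

lemma tendsto_gridEnergy_dyadic {ψ g : ℝ → ℝ} {K : ℝ≥0} (hψ : Continuous ψ)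
    (hg : LipschitzWith K g) {T : ℝ} (hT : 0 < T) :
    Tendsto (fun k : ℕ => gridEnergy ψ g (T / 2 ^ k) (2 ^ k)) atTop
      (𝓝 (∫ t in (0)..T, ψ (deriv g t))) := by
  have hδ : ∀ k : ℕ, 0 < T / 2 ^ k := fun k => by positivity
  have hδ0 : Tendsto (fun k : ℕ => T / 2 ^ k) atTop (𝓝 0) :=
    tendsto_const_nhds.div_atTop (tendsto_pow_atTop_atTop_of_one_lt one_lt_two)
  have hrepr : ∀ k : ℕ, gridEnergy ψ g (T / 2 ^ k) (2 ^ k)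
      = ∫ t in (0)..T, ψ (gridSlope (T / 2 ^ k) g t) := fun k => by
    rw [← integral_comp_gridSlope (hδ k)]; push_cast; field_simp
  simp only [hrepr]
  obtain ⟨C, hC⟩ := isCompact_Icc.exists_bound_of_continuousOn (s := Icc (-(K : ℝ)) K)
    hψ.continuousOn
  refine intervalIntegral.tendsto_integral_filter_of_dominated_convergence (fun _ => C)
    (Eventually.of_forall fun k =>
      (hψ.measurable.comp (measurable_gridSlope hg.continuous)).aestronglyMeasurable)
    (Eventually.of_forall fun k => Eventually.of_forall fun t _ =>
      hC _ (hg.slope_mem_Icc _ _))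
    intervalIntegrable_const ?_
  filter_upwards [hg.ae_differentiableAt_real] with t ht _
  exact (hψ.tendsto _).comp (tendsto_gridSlope ht hδ hδ0)

def lipschitzPeriodicZeroMean (p q : ℝ) (hpq : p ≤ q) (K : ℝ≥0) : Set (Icc p q →ᵇ ℝ) :=
  {f | LipschitzWith K f ∧ IccExtend hpq f p = IccExtend hpq f q ∧
    ∫ t in p..q, IccExtend hpq f t = 0}

section LipschitzPeriodicZeroMean

variable {p q : ℝ} {K : ℝ≥0}

lemma zero_mem_lipschitzPeriodicZeroMean (hpq : p ≤ q) :
    (0 : Icc p q →ᵇ ℝ) ∈ lipschitzPeriodicZeroMean p q hpq K := by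
  refine ⟨?_, rfl, by simp [IccExtend]⟩
  exact LipschitzWith.const' (0 : ℝ)

lemma isClosed_lipschitzPeriodicZeroMean (hpq : p ≤ q) :
    IsClosed (lipschitzPeriodicZeroMean p q hpq K) := by
  have hlip : IsClosed {f : Icc p q →ᵇ ℝ | LipschitzWith K f} :=
    (isClosed_setOfPred_lipschitzWith (α := Icc p q) (β := ℝ) K).preimage
      (BoundedContinuousFunction.continuous_coe (α := Icc p q) (β := ℝ))
  have hper : IsClosed {f : Icc p q →ᵇ ℝ | IccExtend hpq f p = IccExtend hpq f q} :=
    isClosed_eq (continuous_eval_const _) (continuous_eval_const _)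
  have hmean : IsClosed {f : Icc p q →ᵇ ℝ | ∫ t in p..q, IccExtend hpq f t = 0} :=
    isClosed_eq (continuous_integral_IccExtend hpq (L := fun _ x => x) continuous_snd.continuousOn)
      continuous_const
  exact hlip.inter (hper.inter hmean)

lemma abs_le_of_mem_lipschitzPeriodicZeroMean (hpq : p < q) {f : Icc p q →ᵇ ℝ}
    (hf : f ∈ lipschitzPeriodicZeroMean p q hpq.le K) (x : Icc p q) : |f x| ≤ K * (q - p) := by
  have := abs_le_of_lipschitzOnWith_of_integral_eq_zero hpq (hf.1.IccExtend hpq.le).lipschitzOnWith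
    hf.2.2 x.2
  rwa [IccExtend_val] at this

lemma isCompact_lipschitzPeriodicZeroMean (hpq : p < q) :
    IsCompact (lipschitzPeriodicZeroMean p q hpq.le K) := by
  have : CompactSpace (Icc p q) := isCompact_iff_compactSpace.1 isCompact_Icc
  refine BoundedContinuousFunction.arzela_ascoli₂ (Icc (-(K * (q - p))) (K * (q - p)))
    isCompact_Icc _ (isClosed_lipschitzPeriodicZeroMean hpq.le)
    (fun f x hf => abs_le.1 (abs_le_of_mem_lipschitzPeriodicZeroMean hpq hf x)) ?_
  exact (LipschitzWith.uniformEquicontinuous _ K fun f => f.2.1).equicontinuous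

end LipschitzPeriodicZeroMean

lemma exists_mem_lipschitzPeriodicZeroMean_eqOn {p q : ℝ} (hpq : p ≤ q) {K : ℝ≥0} {v : ℝ → ℝ}
    (hv : LipschitzOnWith K v (Icc p q)) (hper : v p = v q) (hmean : ∫ t in p..q, v t = 0) :
    ∃ f ∈ lipschitzPeriodicZeroMean p q hpq K, EqOn v (IccExtend hpq f) (Icc p q) := by
  let f : Icc p q →ᵇ ℝ :=
    BoundedContinuousFunction.mkOfCompact ⟨(Icc p q).domRestrict v, hv.continuousOn.domRestrict⟩
  have hf : EqOn v (IccExtend hpq f) (Icc p q) := fun t ht => by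
    rw [IccExtend_of_mem _ _ ht]; rfl
  refine ⟨f, ⟨hv.to_restrict, ?_, ?_⟩, hf⟩
  · rw [← hf (left_mem_Icc.2 hpq), ← hf (right_mem_Icc.2 hpq), hper]
  · rw [← intervalIntegral.integral_congr (by rwa [uIcc_of_le hpq]), hmean]

theorem exists_isMinOn_integral_comp_deriv_add {T : ℝ} (hT : 0 < T) {K : ℝ≥0} {ψ : ℝ → ℝ}
    (hψ : Continuous ψ) (hψconv : ConvexOn ℝ (Icc (-(K : ℝ)) K) ψ) {L : ℝ → ℝ → ℝ}
    (hL : ContinuousOn (fun z : ℝ × ℝ => L z.1 z.2) (Icc 0 T ×ˢ univ)) :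
    ∃ f ∈ lipschitzPeriodicZeroMean 0 T hT.le K, IsMinOn (fun f : Icc (0 : ℝ) T →ᵇ ℝ =>
      ∫ t in (0)..T, (ψ (deriv (IccExtend hT.le f) t) + L t (IccExtend hT.le f t)))
      (lipschitzPeriodicZeroMean 0 T hT.le K) f := by
  let lower : (Icc (0 : ℝ) T →ᵇ ℝ) → ℝ := fun f => ∫ t in (0)..T, L t (IccExtend hT.le f t)
  refine (isCompact_lipschitzPeriodicZeroMean hT).exists_isMinOn_of_monotone_of_tendsto
    ⟨0, zero_mem_lipschitzPeriodicZeroMean hT.le⟩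
    (J' := fun k f => gridEnergy ψ (IccExtend hT.le f) (T / 2 ^ k) (2 ^ k) + lower f)
    (fun k => Continuous.continuousOn ?_) (fun f hf => ?_) (fun f hf => ?_)
  · refine Continuous.add ?_ (continuous_integral_IccExtend hT.le hL)
    simp only [gridEnergy, slope_def_field]
    fun_prop
  · exact (monotone_gridEnergy_dyadic hψconv (hf.1.IccExtend hT.le).slope_mem_Icc hT.le).add_const _
  · have hg := hf.1.IccExtend hT.le
    have hLg : IntervalIntegrable (fun t => L t (IccExtend hT.le f t)) volume 0 T :=
      ContinuousOn.intervalIntegrable_of_Icc hT.le (hL.comp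
        (continuousOn_id.prodMk hg.continuous.continuousOn) fun t ht => ⟨ht, mem_univ _⟩)
    rw [intervalIntegral.integral_add (hg.intervalIntegrable_comp_deriv hψ _ _) hLg]
    exact (tendsto_gridEnergy_dyadic hψ hg hT).add_const _

theorem exists_forall_integral_comp_deriv_add_le {T : ℝ} (hT : 0 < T) {K : ℝ≥0} {Φ : ℝ → ℝ}
    (hΦconv : ConvexOn ℝ (Icc (-(K : ℝ)) K) Φ) (hΦcont : ContinuousOn Φ (Icc (-(K : ℝ)) K))
    {L : ℝ → ℝ → ℝ} (hL : ContinuousOn (fun z : ℝ × ℝ => L z.1 z.2) (Icc 0 T ×ˢ univ)) :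
    ∃ w : ℝ → ℝ, (LipschitzOnWith K w (Icc 0 T) ∧ w 0 = w T ∧ ∫ t in (0)..T, w t = 0) ∧
      ∀ v : ℝ → ℝ, LipschitzOnWith K v (Icc 0 T) → v 0 = v T → ∫ t in (0)..T, v t = 0 →
        ∫ t in (0)..T, (Φ (deriv w t) + L t (w t)) ≤
          ∫ t in (0)..T, (Φ (deriv v t) + L t (v t)) := by
  have hK : -(K : ℝ) ≤ K := by linarith [K.2]
  -- `Φ` made continuous on `ℝ` by freezing it outside `[-K, K]`, which no slope or
  -- derivative of a `K`-Lipschitz function leaves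
  set ψ := IccExtend hK ((Icc (-(K : ℝ)) K).domRestrict Φ)
  have hψΦ : EqOn ψ Φ (Icc (-(K : ℝ)) K) := fun x hx => IccExtend_of_mem hK _ hx
  obtain ⟨f, hfS, hmin⟩ := exists_isMinOn_integral_comp_deriv_add hT
    hΦcont.domRestrict.Icc_extend' (hΦconv.congr hψΦ.symm) hL
  have hrepr : ∀ f ∈ lipschitzPeriodicZeroMean 0 T hT.le K, ∀ v : ℝ → ℝ,
      EqOn v (IccExtend hT.le f) (Icc 0 T) → ∫ t in (0)..T, (Φ (deriv v t) + L t (v t)) =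
        ∫ t in (0)..T, (ψ (deriv (IccExtend hT.le f) t) + L t (IccExtend hT.le f t)) := by
    intro f hf v hv
    rw [intervalIntegral.integral_comp_deriv_congr (by rwa [uIcc_of_le hT.le])
      (fun t x y => Φ y + L t x)]
    exact intervalIntegral.integral_congr fun t _ => by
      simp only [hψΦ ((hf.1.IccExtend hT.le).deriv_mem_Icc t)]
  refine ⟨IccExtend hT.le f, ⟨(hfS.1.IccExtend hT.le).lipschitzOnWith, hfS.2⟩,
    fun v hv hper hmean => ?_⟩
  obtain ⟨fv, hfvS, hfv⟩ := exists_mem_lipschitzPeriodicZeroMean_eqOn hT.le hv hper hmean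
  rw [hrepr f hfS _ fun _ _ => rfl, hrepr fv hfvS v hfv]
  exact hmin hfvS

theorem stmt7_general (T a : ℝ) (hT : 0 < T) (ha : 0 < a)
    (Φ h : ℝ → ℝ) (F : ℝ → ℝ → ℝ)
    (hΦconv : ConvexOn ℝ (Set.Icc (-a) a) Φ)
    (hΦcont : ContinuousOn Φ (Set.Icc (-a) a))
    (hFcont : ContinuousOn (fun p : ℝ × ℝ => F p.1 p.2) (Set.Icc 0 T ×ˢ Set.univ))
    (hh : Continuous h) :
    ∃ w : ℝ → ℝ,
      (LipschitzOnWith (Real.toNNReal a) w (Set.Icc 0 T) ∧ w 0 = w T ∧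
        (∫ t in (0:ℝ)..T, w t) = 0) ∧
      ∀ v : ℝ → ℝ,
        LipschitzOnWith (Real.toNNReal a) v (Set.Icc 0 T) → v 0 = v T →
        (∫ t in (0:ℝ)..T, v t) = 0 →
        (∫ t in (0:ℝ)..T, (Φ (deriv w t) + h t * w t + F t (w t))) ≤
          ∫ t in (0:ℝ)..T, (Φ (deriv v t) + h t * v t + F t (v t)) := by
  rw [← Real.coe_toNNReal a ha.le] at hΦconv hΦcont
  simpa only [add_assoc] using exists_forall_integral_comp_deriv_add_le hT hΦconv hΦcont
    (L := fun t x => h t * x + F t x)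
    (((hh.comp continuous_fst).mul continuous_snd).continuousOn.add hFcont)

/-- The functional `I(v) = ∫₀^T [Φ(v') + h v + F(t,v)] dt`, with `Φ` convex continuous
on `[−a,a]`, `F` continuous and bounded, and `h` continuous with zero mean, attains its
infimum on the set `W ∩ K` of zero-mean `T`-periodic Lipschitz functions with
Lipschitz constant at most `a`. -/
theorem stmt7 (T a : ℝ) (hT : 0 < T) (ha : 0 < a)
    (Φ h : ℝ → ℝ) (F : ℝ → ℝ → ℝ)
    (hΦconv : ConvexOn ℝ (Set.Icc (-a) a) Φ)
    (hΦcont : ContinuousOn Φ (Set.Icc (-a) a))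
    (hFcont : ContinuousOn (fun p : ℝ × ℝ => F p.1 p.2) (Set.Icc 0 T ×ˢ Set.univ))
    (hFbdd : ∃ C : ℝ, ∀ t ∈ Set.Icc 0 T, ∀ s : ℝ, |F t s| ≤ C)
    (hh : Continuous h) (hmean : (∫ t in (0:ℝ)..T, h t) = 0) :
    ∃ w : ℝ → ℝ,
      (LipschitzOnWith (Real.toNNReal a) w (Set.Icc 0 T) ∧ w 0 = w T ∧
        (∫ t in (0:ℝ)..T, w t) = 0) ∧
      ∀ v : ℝ → ℝ,
        LipschitzOnWith (Real.toNNReal a) v (Set.Icc 0 T) → v 0 = v T →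
        (∫ t in (0:ℝ)..T, v t) = 0 →
        (∫ t in (0:ℝ)..T, (Φ (deriv w t) + h t * w t + F t (w t))) ≤
          ∫ t in (0:ℝ)..T, (Φ (deriv v t) + h t * v t + F t (v t)) :=
  stmt7_general T a hT ha Φ h F hΦconv hΦcont hFcont hh
end

section
/- Let Φ : [−a,a] → ℝ satisfy Φ(s) ≥ k s² for some k > 0, let F : [0,T] × ℝ → ℝ be continuous with F(t,s) ≥ F₀, and h : [0,T] → ℝ continuous. Assume T ≤ 2π (so the Poincaré–Wirtinger inequality ∫₀^T v² ≤ ∫₀^T v'² holds for zero-mean periodic Lipschitz v). Then for every zero-mean T-periodic Lipschitz function ṽ with ‖ṽ'‖_∞ ≤ a: ∫₀^T [Φ(ṽ') + h ṽ + F(t,ṽ)] dt ≥ F₀ T − T ‖h‖_∞² / (4k). -/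
/-!
Split the functional into the kinetic part `∫ Φ(ṽ')`, the linear part `∫ h ṽ` and the potential
part `∫ F(t, ṽ)`. The last is at least `F₀ T`. Since `Φ(s) ≥ k s²` and `T ≤ 2π`, Wirtinger's
inequality gives `∫ Φ(ṽ') ≥ k ∫ ṽ'² ≥ k ∫ ṽ²`, and pointwise `k ṽ² + h ṽ ≥ -h²/(4k)` by completing
the square. Wirtinger's inequality itself follows from Parseval: for a zero-mean periodic function
`c₀(v) = 0`, and integration by parts gives `|cₙ(v)| = T/(2π|n|) |cₙ(v')| ≤ |cₙ(v')|` for `n ≠ 0`.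
-/

open Set MeasureTheory

theorem ContinuousOn.memLp_comp_of_mapsTo {E : Type*} [NormedAddCommGroup E]
    {φ : ℝ → E} {g : ℝ → ℝ} {a b c d : ℝ} (hφ : ContinuousOn φ (Icc c d)) (hg : Measurable g)
    (hmaps : MapsTo g (Icc a b) (Icc c d)) (hab : a ≤ b) (p : ENNReal) :
    MemLp (fun x => φ (g x)) p (volume.restrict (Ioc a b)) := by
  have hcd : c ≤ d := (hmaps ⟨le_rfl, hab⟩).1.trans (hmaps ⟨le_rfl, hab⟩).2
  -- `φ` is only continuous on `[c, d]`; measurability comes from its continuous extension.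
  have hext : Continuous (IccExtend hcd ((Icc c d).domRestrict φ)) :=
    hφ.domRestrict.Icc_extend'
  have hmeas : AEStronglyMeasurable (fun x => φ (g x)) (volume.restrict (Ioc a b)) := by
    refine (hext.comp_aestronglyMeasurable hg.aestronglyMeasurable).congr ?_
    refine ae_restrict_of_forall_mem measurableSet_Ioc fun x hx => ?_
    simp only [IccExtend_of_mem hcd _ (hmaps (Ioc_subset_Icc_self hx))]
    rfl
  obtain ⟨C, hC⟩ := isCompact_Icc.exists_bound_of_continuousOn hφ
  exact .of_bound hmeas C <| ae_restrict_of_forall_mem measurableSet_Ioc fun x hx =>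
    hC _ (hmaps (Ioc_subset_Icc_self hx))

theorem ContinuousOn.intervalIntegrable_comp_of_mapsTo {E : Type*} [NormedAddCommGroup E]
    {φ : ℝ → E} {g : ℝ → ℝ} {a b c d : ℝ} (hφ : ContinuousOn φ (Icc c d)) (hg : Measurable g)
    (hmaps : MapsTo g (Icc a b) (Icc c d)) (hab : a ≤ b) :
    IntervalIntegrable (fun x => φ (g x)) volume a b :=
  (intervalIntegrable_iff_integrableOn_Ioc_of_le hab).2
    ((hφ.memLp_comp_of_mapsTo hg hmaps hab 1).integrable le_rfl)

theorem mul_le_intervalIntegral_of_le {a b c : ℝ} {f : ℝ → ℝ} (hab : a ≤ b)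
    (hf : IntervalIntegrable f volume a b) (hc : ∀ x ∈ Icc a b, c ≤ f x) :
    (b - a) * c ≤ ∫ x in a..b, f x := by
  simpa using intervalIntegral.integral_mono_on hab intervalIntegrable_const hf hc

theorem neg_sq_div_le_mul_sq_add_mul {k c M : ℝ} (hk : 0 < k) (hc : |c| ≤ M) (x : ℝ) :
    -(M ^ 2 / (4 * k)) ≤ k * x ^ 2 + c * x := by
  have hcM : c ^ 2 ≤ M ^ 2 := sq_le_sq' (abs_le.1 hc).1 (abs_le.1 hc).2
  rw [neg_le, le_div_iff₀ (by positivity)]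
  nlinarith [sq_nonneg (2 * k * x + c)]

section Wirtinger

open Complex Real

variable {a b : ℝ}

theorem fourierCoeffOn_zero (hab : a < b) (f : ℝ → ℂ) :
    fourierCoeffOn hab f 0 = (1 / (b - a)) • ∫ x in a..b, f x := by
  simp [fourierCoeffOn_eq_integral]

theorem fourierCoeffOn_eq_mul_fourierCoeffOn_deriv (hab : a < b) {f f' : ℝ → ℂ} {n : ℤ} (hn : n ≠ 0)
    (hf : ∀ x ∈ Icc a b, HasDerivAt f (f' x) x) (hf' : IntervalIntegrable f' volume a b)
    (hper : f a = f b) :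
    fourierCoeffOn hab f n = (b - a) / (2 * π * I * n) * fourierCoeffOn hab f' n := by
  rw [fourierCoeffOn_of_hasDerivAt hab hn (by rwa [uIcc_of_le hab.le]) hf', hper, sub_self,
    mul_zero, zero_sub]
  have : (2 * π * I * n : ℂ) ≠ 0 := by simp [hn, pi_ne_zero]
  field_simp

theorem norm_fourierCoeffOn_le_norm_fourierCoeffOn_deriv (hab : a < b) (hba : b - a ≤ 2 * π)
    {f f' : ℝ → ℂ} {n : ℤ} (hn : n ≠ 0) (hf : ∀ x ∈ Icc a b, HasDerivAt f (f' x) x)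
    (hf' : IntervalIntegrable f' volume a b) (hper : f a = f b) :
    ‖fourierCoeffOn hab f n‖ ≤ ‖fourierCoeffOn hab f' n‖ := by
  have h1n : (1 : ℝ) ≤ |(n : ℝ)| := by exact_mod_cast Int.one_le_abs hn
  have hfactor : ‖((b - a : ℝ) : ℂ) / (2 * π * I * n)‖ ≤ 1 := by
    rw [norm_div, div_le_one (by simp [hn, pi_ne_zero])]
    simp only [norm_mul, norm_real, Real.norm_eq_abs, abs_of_pos (sub_pos.2 hab), norm_I,
      norm_intCast, Complex.norm_ofNat, abs_of_pos pi_pos]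
    nlinarith [pi_pos]
  rw [fourierCoeffOn_eq_mul_fourierCoeffOn_deriv hab hn hf hf' hper, norm_mul]
  push_cast at hfactor
  exact mul_le_of_le_one_left (norm_nonneg _) hfactor

theorem integral_norm_sq_le_integral_norm_deriv_sq (hab : a < b) (hba : b - a ≤ 2 * π)
    {f f' : ℝ → ℂ} (hf : ∀ x ∈ Icc a b, HasDerivAt f (f' x) x)
    (hf' : MemLp f' 2 (volume.restrict (Ioc a b))) (hper : f a = f b)
    (hmean : ∫ x in a..b, f x = 0) :
    ∫ x in a..b, ‖f x‖ ^ 2 ≤ ∫ x in a..b, ‖f' x‖ ^ 2 := by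
  have hf'int : IntervalIntegrable f' volume a b :=
    (intervalIntegrable_iff_integrableOn_Ioc_of_le hab.le).2 (hf'.integrable one_le_two)
  have hfL2 : MemLp f 2 (volume.restrict (Ioc a b)) :=
    ContinuousOn.memLp_comp_of_mapsTo (fun x hx => (hf x hx).continuousAt.continuousWithinAt)
      measurable_id (mapsTo_id _) hab.le 2
  have hcoeff : ∀ n, ‖fourierCoeffOn hab f n‖ ^ 2 ≤ ‖fourierCoeffOn hab f' n‖ ^ 2 := by
    intro n
    rcases eq_or_ne n 0 with rfl | hn
    · rw [fourierCoeffOn_zero hab, hmean, smul_zero, norm_zero]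
      exact pow_le_pow_left₀ le_rfl (norm_nonneg _) 2
    · exact pow_le_pow_left₀ (norm_nonneg _)
        (norm_fourierCoeffOn_le_norm_fourierCoeffOn_deriv hab hba hn hf hf'int hper) 2
  have := hasSum_le hcoeff (hasSum_sq_fourierCoeffOn hab hfL2) (hasSum_sq_fourierCoeffOn hab hf')
  exact (smul_le_smul_iff_of_pos_left (inv_pos.2 (sub_pos.2 hab))).1 this

theorem integral_sq_le_integral_deriv_sq (hab : a < b) (hba : b - a ≤ 2 * π) {f f' : ℝ → ℝ}
    (hf : ∀ x ∈ Icc a b, HasDerivAt f (f' x) x) (hf' : MemLp f' 2 (volume.restrict (Ioc a b)))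
    (hper : f a = f b) (hmean : ∫ x in a..b, f x = 0) :
    ∫ x in a..b, f x ^ 2 ≤ ∫ x in a..b, f' x ^ 2 := by
  have := integral_norm_sq_le_integral_norm_deriv_sq hab hba (f := fun x => (f x : ℂ))
    (fun x hx => (hf x hx).ofReal_comp) hf'.ofReal (by simp [hper])
    (by rw [intervalIntegral.integral_ofReal, hmean, Complex.ofReal_zero])
  simpa only [Complex.norm_real, Real.norm_eq_abs, sq_abs] using this

end Wirtinger

theorem mul_integral_sq_le_integral_comp_deriv {a b c d k : ℝ} (hab : a < b)
    (hba : b - a ≤ 2 * Real.pi) (hk : 0 ≤ k) {Φ : ℝ → ℝ} (hΦcont : ContinuousOn Φ (Icc c d))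
    (hΦ : ∀ s ∈ Icc c d, k * s ^ 2 ≤ Φ s) {v v' : ℝ → ℝ}
    (hv : ∀ x ∈ Icc a b, HasDerivAt v (v' x) x) (hv'_meas : Measurable v')
    (hv'_mem : MapsTo v' (Icc a b) (Icc c d)) (hper : v a = v b)
    (hmean : ∫ x in a..b, v x = 0) :
    k * ∫ x in a..b, v x ^ 2 ≤ ∫ x in a..b, Φ (v' x) := by
  have hv'_L2 := continuousOn_id.memLp_comp_of_mapsTo hv'_meas hv'_mem hab.le 2
  calc k * ∫ x in a..b, v x ^ 2
      ≤ k * ∫ x in a..b, v' x ^ 2 := by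
        gcongr
        exact integral_sq_le_integral_deriv_sq hab hba hv hv'_L2 hper hmean
    _ = ∫ x in a..b, k * v' x ^ 2 := (intervalIntegral.integral_const_mul _ _).symm
    _ ≤ ∫ x in a..b, Φ (v' x) :=
        intervalIntegral.integral_mono_on hab.le
          ((continuous_const.mul (continuous_pow 2)).continuousOn.intervalIntegrable_comp_of_mapsTo
            hv'_meas hv'_mem hab.le)
          (hΦcont.intervalIntegrable_comp_of_mapsTo hv'_meas hv'_mem hab.le)
          fun x hx => hΦ _ (hv'_mem hx)

theorem stmt12_general (T a k F₀ : ℝ) (hT : 0 < T) (hT2 : T ≤ 2 * Real.pi)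
    (hk : 0 < k)
    (Φ : ℝ → ℝ) (hΦcont : ContinuousOn Φ (Set.Icc (-a) a))
    (hΦ : ∀ s ∈ Set.Icc (-a) a, k * s ^ 2 ≤ Φ s)
    (F : ℝ → ℝ → ℝ)
    (hFcont : ContinuousOn (fun p : ℝ × ℝ => F p.1 p.2) (Set.Icc 0 T ×ˢ Set.univ))
    (hF₀ : ∀ t ∈ Set.Icc 0 T, ∀ s : ℝ, F₀ ≤ F t s)
    (h : ℝ → ℝ) (hh : Continuous h)
    (v v' : ℝ → ℝ) (hv : ∀ t : ℝ, HasDerivAt v (v' t) t)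
    (hv' : ∀ t ∈ Set.Icc 0 T, |v' t| ≤ a)
    (hper : v 0 = v T) (hmean : (∫ t in (0:ℝ)..T, v t) = 0) :
    F₀ * T - T * (⨆ t : Set.Icc (0:ℝ) T, |h t.1|) ^ 2 / (4 * k) ≤
      ∫ t in (0:ℝ)..T, (Φ (v' t) + h t * v t + F t (v t)) := by
  set M := ⨆ t : Icc (0:ℝ) T, |h t.1|
  have hM : ∀ t ∈ Icc 0 T, |h t| ≤ M := fun t ht =>
    le_ciSup (isCompact_range (by fun_prop : Continuous fun t : Icc (0:ℝ) T => |h t|)).bddAbove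
      (⟨t, ht⟩ : Icc 0 T)
  have hv_cont : Continuous v := continuous_iff_continuousAt.2 fun t => (hv t).continuousAt
  have hv'_meas : Measurable v' := by
    simpa only [funext fun t => (hv t).deriv] using measurable_deriv v
  have hv'_mem : MapsTo v' (Icc 0 T) (Icc (-a) a) := fun t ht => abs_le.1 (hv' t ht)
  have hΦv' := hΦcont.intervalIntegrable_comp_of_mapsTo hv'_meas hv'_mem hT.le
  have hkv : IntervalIntegrable (fun t => k * v t ^ 2) volume 0 T :=
    (continuous_const.mul (hv_cont.pow 2)).intervalIntegrable 0 T
  have hhv : IntervalIntegrable (fun t => h t * v t) volume 0 T :=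
    (hh.mul hv_cont).intervalIntegrable 0 T
  have hFv : IntervalIntegrable (fun t => F t (v t)) volume 0 T := by
    refine ContinuousOn.intervalIntegrable ?_
    rw [uIcc_of_le hT.le]
    exact hFcont.comp (continuous_id.prodMk hv_cont).continuousOn fun t ht => ⟨ht, trivial⟩
  have hkinetic : k * ∫ t in (0:ℝ)..T, v t ^ 2 ≤ ∫ t in (0:ℝ)..T, Φ (v' t) :=
    mul_integral_sq_le_integral_comp_deriv hT (by rwa [sub_zero]) hk.le hΦcont hΦ
      (fun t _ => hv t) hv'_meas hv'_mem hper hmean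
  have hquadratic := mul_le_intervalIntegral_of_le hT.le (hkv.add hhv) fun t ht =>
    neg_sq_div_le_mul_sq_add_mul hk (hM t ht) (v t)
  have hpotential := mul_le_intervalIntegral_of_le hT.le hFv fun t ht => hF₀ t ht (v t)
  rw [intervalIntegral.integral_add hkv hhv, intervalIntegral.integral_const_mul] at hquadratic
  rw [intervalIntegral.integral_add (hΦv'.add hhv) hFv, intervalIntegral.integral_add hΦv' hhv,
    mul_div_assoc]
  linarith

/-- If `Φ(s) ≥ k s²` on `[−a,a]`, `F ≥ F₀` is continuous, `h` is continuous, and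
`T ≤ 2π`, then for every zero-mean `T`-periodic Lipschitz `ṽ` with `‖ṽ'‖_∞ ≤ a`:
`∫₀^T [Φ(ṽ') + h ṽ + F(t,ṽ)] dt ≥ F₀ T − T ‖h‖_∞² / (4k)`. -/
theorem stmt12 (T a k F₀ : ℝ) (hT : 0 < T) (hT2 : T ≤ 2 * Real.pi)
    (ha : 0 < a) (hk : 0 < k)
    (Φ : ℝ → ℝ) (hΦcont : ContinuousOn Φ (Set.Icc (-a) a))
    (hΦ : ∀ s ∈ Set.Icc (-a) a, k * s ^ 2 ≤ Φ s)
    (F : ℝ → ℝ → ℝ)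
    (hFcont : ContinuousOn (fun p : ℝ × ℝ => F p.1 p.2) (Set.Icc 0 T ×ˢ Set.univ))
    (hF₀ : ∀ t ∈ Set.Icc 0 T, ∀ s : ℝ, F₀ ≤ F t s)
    (h : ℝ → ℝ) (hh : Continuous h)
    (v v' : ℝ → ℝ) (hv : ∀ t : ℝ, HasDerivAt v (v' t) t)
    (hv' : ∀ t ∈ Set.Icc 0 T, |v' t| ≤ a)
    (hper : v 0 = v T) (hmean : (∫ t in (0:ℝ)..T, v t) = 0) :
    F₀ * T - T * (⨆ t : Set.Icc (0:ℝ) T, |h t.1|) ^ 2 / (4 * k) ≤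
      ∫ t in (0:ℝ)..T, (Φ (v' t) + h t * v t + F t (v t)) :=
  stmt12_general T a k F₀ hT hT2 hk Φ hΦcont hΦ F hFcont hF₀ h hh v v' hv hv' hper hmean
end
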